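/- Backward parameter-Lipschitz bound. Consider the ResNet with input ‖x‖₂ ≤ B and activation satisfying the stated regularity conditions. Define δ^{(L)}(θ) = (σ_w/√n)·w^{(L+1)} and δ^{(ℓ)}(θ) = ( I_n + α·(σ_w/√n)·W^{(ℓ+1)ᵀ}·diag{φ'(g^{(ℓ+1)})}·(σ_v/√n)·V^{(ℓ+1)ᵀ} )·δ^{(ℓ+1)}(θ) for ℓ = L−1,…,0. There exists a constant K depending only on L, α, σ_v, σ_w, C_φ, B, and d (and not on n) such that for all parameter vectors θ, θ̃ both satisfying the spectral bounds, and for every ℓ ∈ {0,1,…,L}: ‖δ^{(ℓ)}(θ) − δ^{(ℓ)}(θ̃)‖₂ ≤ K·‖θ − θ̃‖₂, where ‖θ − θ̃‖₂ is the Euclidean norm of the difference of the full (vectorized) parameter vectors. -/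

import Mathlib

/-!
Under the spectral bounds every residual block, and the transpose of its Jacobian, has operator
norm at most `blockGain = 1 + 9 α σ_v σ_w C_φ`: the factors `3√n` bounding `‖W‖` and `‖V‖` cancel
the scalings `1/√n`. Hence `‖x^{(ℓ)}‖ = O(√n)` and `‖δ^{(ℓ)}‖ = O(1)`. Comparing two parameter
vectors layer by layer, each step multiplies the previous error by at most `blockGain` and adds a
term linear in `‖θ − θ̃‖` (an operator norm is at most the Frobenius norm, which is at most
`‖θ − θ̃‖`); in the forward pass the `√n` of `‖x^{(ℓ)}‖` is absorbed by `σ_w/√n`, and in the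
backward pass the forward error in `g^{(ℓ)}` enters through the Lipschitz bound on `φ'`. A discrete
Grönwall inequality `a_{k+1} ≤ r a_k + b r^k ⟹ a_k ≤ (a_0 + k b) r^k` turns these recursions into
bounds independent of `n`.
-/

open MeasureTheory ProbabilityTheory Filter

noncomputable section

/-- Index type for all ResNet parameters: w^{(L+1)}, {W^{(ℓ)}}, {V^{(ℓ)}}, U. -/
abbrev ParamIdx (n L d : ℕ) : Type :=
  (Fin n) ⊕ (Fin L × Fin n × Fin n) ⊕ (Fin L × Fin n × Fin n) ⊕ (Fin n × Fin d)

/-- The full (vectorized) parameter vector. -/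
abbrev Params (n L d : ℕ) : Type := ParamIdx n L d → ℝ

/-- Last-layer weight vector w^{(L+1)}. -/
def wOut {n L d : ℕ} (θ : Params n L d) : Fin n → ℝ := fun i => θ (Sum.inl i)

/-- W^{(ℓ)} for ℓ = 1,…,L (zero outside this range). -/
def Wmat {n L d : ℕ} (θ : Params n L d) (ℓ : ℕ) : Matrix (Fin n) (Fin n) ℝ :=
  if h : 1 ≤ ℓ ∧ ℓ ≤ L then
    Matrix.of fun i j => θ (Sum.inr (Sum.inl (⟨ℓ - 1, by omega⟩, i, j)))
  else 0

/-- V^{(ℓ)} for ℓ = 1,…,L (zero outside this range). -/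
def Vmat {n L d : ℕ} (θ : Params n L d) (ℓ : ℕ) : Matrix (Fin n) (Fin n) ℝ :=
  if h : 1 ≤ ℓ ∧ ℓ ≤ L then
    Matrix.of fun i j => θ (Sum.inr (Sum.inr (Sum.inl (⟨ℓ - 1, by omega⟩, i, j))))
  else 0

/-- Input lifting matrix U. -/
def Umat {n L d : ℕ} (θ : Params n L d) : Matrix (Fin n) (Fin d) ℝ :=
  Matrix.of fun i j => θ (Sum.inr (Sum.inr (Sum.inr (i, j))))

/-- Euclidean (ℓ²) norm of a finite vector. -/
def l2norm {k : ℕ} (v : Fin k → ℝ) : ℝ := Real.sqrt (∑ i, (v i) ^ 2)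

/-- Euclidean norm of a full parameter vector. -/
def paramNorm {n L d : ℕ} (θ : Params n L d) : ℝ := Real.sqrt (∑ i, (θ i) ^ 2)

/-- Spectral (operator) norm of a matrix. -/
def specNorm {m k : ℕ} (A : Matrix (Fin m) (Fin k) ℝ) : ℝ :=
  sSup ((fun v => l2norm (A.mulVec v)) '' {v | l2norm v ≤ 1})

/-- Smallest singular value of a matrix. -/
def singMin {m k : ℕ} (A : Matrix (Fin m) (Fin k) ℝ) : ℝ :=
  sInf ((fun v => l2norm (A.mulVec v)) '' {v | l2norm v = 1})

/-- Frobenius norm of a matrix. -/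
def frobNorm {m k : ℕ} (A : Matrix (Fin m) (Fin k) ℝ) : ℝ :=
  Real.sqrt (∑ i, ∑ j, (A i j) ^ 2)

/-- Layer activations x^{(ℓ)} of the ResNet. -/
def xvec {n L d : ℕ} (φ : ℝ → ℝ) (α σv σw : ℝ) (θ : Params n L d) (x : Fin d → ℝ) :
    ℕ → Fin n → ℝ
  | 0 => (Real.sqrt d)⁻¹ • (Umat θ).mulVec x
  | ℓ + 1 =>
      xvec φ α σv σw θ x ℓ +
        (α * σv / Real.sqrt n) • (Vmat θ (ℓ + 1)).mulVec
          (fun i => φ ((σw / Real.sqrt n) *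
              (Wmat θ (ℓ + 1)).mulVec (xvec φ α σv σw θ x ℓ) i))

/-- Pre-activations g^{(ℓ)} of the ResNet (meaningful for ℓ = 1,…,L). -/
def gvec {n L d : ℕ} (φ : ℝ → ℝ) (α σv σw : ℝ) (θ : Params n L d) (x : Fin d → ℝ)
    (ℓ : ℕ) : Fin n → ℝ :=
  (σw / Real.sqrt n) • (Wmat θ ℓ).mulVec (xvec φ α σv σw θ x (ℓ - 1))

/-- The ResNet output f(x;θ). -/
def fnet {n L d : ℕ} (φ : ℝ → ℝ) (α σv σw : ℝ) (θ : Params n L d) (x : Fin d → ℝ) : ℝ :=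
  (σw / Real.sqrt n) * ∑ i, wOut θ i * xvec φ α σv σw θ x L i

/-- The i.i.d. standard Gaussian initialization measure on the parameters. -/
def initMeasure (n L d : ℕ) : Measure (Params n L d) :=
  Measure.pi fun _ => gaussianReal 0 1

/-- Standard Gaussian on ℝ². -/
def stdGauss2 : Measure (ℝ × ℝ) := (gaussianReal 0 1).prod (gaussianReal 0 1)

/-- The centered bivariate Gaussian N(0,Σ) for Σ = [[K11,K12],[K12,K22]] positive
semidefinite, realized via the Cholesky factorization. -/
def biGauss (K11 K12 K22 : ℝ) : Measure (ℝ × ℝ) :=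
  stdGauss2.map (fun z => (Real.sqrt K11 * z.1,
    (K12 / Real.sqrt K11) * z.1 + Real.sqrt (K22 - K12 ^ 2 / K11) * z.2))

/-- T(Σ) = E_{(u,v)∼N(0,Σ)}[φ(u)φ(v)]. -/
def TT (φ : ℝ → ℝ) (K11 K12 K22 : ℝ) : ℝ :=
  ∫ uv, φ uv.1 * φ uv.2 ∂(biGauss K11 K12 K22)

/-- Ṫ(Σ) = E_{(u,v)∼N(0,Σ)}[φ'(u)φ'(v)]. -/
def TTdot (φ : ℝ → ℝ) (K11 K12 K22 : ℝ) : ℝ :=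
  ∫ uv, deriv φ uv.1 * deriv φ uv.2 ∂(biGauss K11 K12 K22)

/-- The limiting GP kernels: `Kker … ℓ x y` is K^{(ℓ+1)}(x,y); in particular
`Kker … 0 x y = K^{(1)}(x,y) = (σ_w²/d)·xᵀy` and `Kker … L x y = K^{(L+1)}(x,y)`. -/
def Kker (φ : ℝ → ℝ) (α σv σw : ℝ) {d : ℕ} : ℕ → (Fin d → ℝ) → (Fin d → ℝ) → ℝ
  | 0 => fun x y => σw ^ 2 / d * ∑ i, x i * y i
  | ℓ + 1 => fun x y =>
      Kker φ α σv σw ℓ x y + α ^ 2 * σv ^ 2 * σw ^ 2 *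
        TT φ (Kker φ α σv σw ℓ x x) (Kker φ α σv σw ℓ x y) (Kker φ α σv σw ℓ y y)

/-- The spectral bounds on a parameter vector: ‖w^{(L+1)}‖₂ ≤ 2√n, ‖U‖ ≤ √d + 2√n, and
‖W^{(ℓ)}‖, ‖V^{(ℓ)}‖ ≤ 3√n for ℓ = 1,…,L. -/
def SpectralBounds {n L d : ℕ} (θ : Params n L d) : Prop :=
  l2norm (wOut θ) ≤ 2 * Real.sqrt n ∧
  specNorm (Umat θ) ≤ Real.sqrt d + 2 * Real.sqrt n ∧
  ∀ ℓ : ℕ, 1 ≤ ℓ → ℓ ≤ L →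
    specNorm (Wmat θ ℓ) ≤ 3 * Real.sqrt n ∧ specNorm (Vmat θ ℓ) ≤ 3 * Real.sqrt n

/-- Auxiliary downward recursion: `deltaAux … k` is δ^{(L−k)}, with
δ^{(L)} = (σ_w/√n)·w^{(L+1)} and
δ^{(ℓ)} = (I + α(σ_w/√n)W^{(ℓ+1)ᵀ}·diag{φ'(g^{(ℓ+1)})}·(σ_v/√n)V^{(ℓ+1)ᵀ})·δ^{(ℓ+1)}. -/
def deltaAux {n L d : ℕ} (φ : ℝ → ℝ) (α σv σw : ℝ) (θ : Params n L d) (x : Fin d → ℝ) :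
    ℕ → Fin n → ℝ
  | 0 => (σw / Real.sqrt n) • wOut θ
  | k + 1 =>
      deltaAux φ α σv σw θ x k +
        (α * σw * σv / (n : ℝ)) •
          ((Wmat θ (L - k)).transpose *
              Matrix.diagonal (fun i => deriv φ (gvec φ α σv σw θ x (L - k) i)) *
              (Vmat θ (L - k)).transpose).mulVec (deltaAux φ α σv σw θ x k)

/-- δ^{(ℓ)} = ∇_{x^{(ℓ)}} f, for ℓ = 0,…,L. -/
def deltaVec {n L d : ℕ} (φ : ℝ → ℝ) (α σv σw : ℝ) (θ : Params n L d) (x : Fin d → ℝ)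
    (ℓ : ℕ) : Fin n → ℝ :=
  deltaAux φ α σv σw θ x (L - ℓ)

open Matrix
open scoped Matrix.Norms.L2Operator

section Euclidean

variable {k m : ℕ}

theorem l2norm_eq_norm (v : Fin k → ℝ) : l2norm v = ‖WithLp.toLp 2 v‖ := by
  simp only [l2norm, EuclideanSpace.norm_eq, Real.norm_eq_abs, sq_abs]

theorem l2norm_nonneg (v : Fin k → ℝ) : 0 ≤ l2norm v := Real.sqrt_nonneg _

theorem l2norm_zero : l2norm (0 : Fin k → ℝ) = 0 := by simp [l2norm]

theorem l2norm_add_le (u v : Fin k → ℝ) : l2norm (u + v) ≤ l2norm u + l2norm v := by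
  simpa only [l2norm_eq_norm, WithLp.toLp_add] using norm_add_le _ _

theorem l2norm_smul (c : ℝ) (v : Fin k → ℝ) : l2norm (c • v) = |c| * l2norm v := by
  simp only [l2norm_eq_norm, WithLp.toLp_smul, norm_smul, Real.norm_eq_abs]

theorem abs_le_l2norm (v : Fin k → ℝ) (i : Fin k) : |v i| ≤ l2norm v := by
  simpa only [l2norm_eq_norm, Real.norm_eq_abs] using
    PiLp.norm_apply_le (WithLp.toLp 2 v) i

theorem l2norm_le_mul_of_abs_le {u v : Fin k → ℝ} {C : ℝ} (hC : 0 ≤ C)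
    (h : ∀ i, |u i| ≤ C * |v i|) : l2norm u ≤ C * l2norm v := by
  rw [l2norm, l2norm, ← Real.sqrt_sq hC, ← Real.sqrt_mul (sq_nonneg C), Finset.mul_sum]
  refine Real.sqrt_le_sqrt (Finset.sum_le_sum fun i _ => ?_)
  rw [← sq_abs (u i), ← sq_abs (v i), ← mul_pow]
  exact pow_le_pow_left₀ (abs_nonneg _) (h i) 2

theorem l2norm_mulVec_le (A : Matrix (Fin m) (Fin k) ℝ) (v : Fin k → ℝ) :
    l2norm (A *ᵥ v) ≤ ‖A‖ * l2norm v := by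
  rw [l2norm_eq_norm, l2norm_eq_norm]
  exact l2_opNorm_mulVec A (WithLp.toLp 2 v)

theorem l2norm_mulVec_sub_mulVec_le (A A' : Matrix (Fin m) (Fin k) ℝ) (v v' : Fin k → ℝ) :
    l2norm (A *ᵥ v - A' *ᵥ v') ≤ ‖A - A'‖ * l2norm v + ‖A'‖ * l2norm (v - v') := by
  have hsplit : A *ᵥ v - A' *ᵥ v' = (A - A') *ᵥ v + A' *ᵥ (v - v') := by
    rw [sub_mulVec, mulVec_sub]; abel
  rw [hsplit]
  exact (l2norm_add_le _ _).trans (add_le_add (l2norm_mulVec_le _ _) (l2norm_mulVec_le _ _))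

theorem specNorm_eq_l2_opNorm (A : Matrix (Fin m) (Fin k) ℝ) : specNorm A = ‖A‖ := by
  rw [specNorm, l2_opNorm_def, ← ContinuousLinearMap.sSup_unitClosedBall_eq_norm]
  congr 1
  ext t
  constructor
  · rintro ⟨v, hv, rfl⟩
    refine ⟨WithLp.toLp 2 v, ?_, ?_⟩
    · simpa [l2norm_eq_norm] using hv
    · simp [l2norm_eq_norm]
  · rintro ⟨v, hv, rfl⟩
    refine ⟨WithLp.ofLp v, ?_, ?_⟩
    · simpa [l2norm_eq_norm] using hv
    · simp [l2norm_eq_norm, toLpLin_apply]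

theorem l2norm_mulVec_le_frobNorm (A : Matrix (Fin m) (Fin k) ℝ) (v : Fin k → ℝ) :
    l2norm (A *ᵥ v) ≤ frobNorm A * l2norm v := by
  rw [l2norm, l2norm, frobNorm, ← Real.sqrt_mul (Finset.sum_nonneg fun i _ =>
    Finset.sum_nonneg fun j _ => sq_nonneg (A i j)), Finset.sum_mul]
  exact Real.sqrt_le_sqrt <| Finset.sum_le_sum fun i _ =>
    Finset.sum_mul_sq_le_sq_mul_sq Finset.univ (A i) v

theorem l2_opNorm_le_frobNorm (A : Matrix (Fin m) (Fin k) ℝ) : ‖A‖ ≤ frobNorm A := by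
  refine ContinuousLinearMap.opNorm_le_bound _ (Real.sqrt_nonneg _) fun v => ?_
  simpa [l2norm_eq_norm, toLpLin_apply] using l2norm_mulVec_le_frobNorm A (WithLp.ofLp v)

theorem l2_opNorm_diagonal_le {a : Fin k → ℝ} {C : ℝ} (hC : 0 ≤ C) (h : ∀ i, |a i| ≤ C) :
    ‖diagonal a‖ ≤ C := by
  rw [l2_opNorm_diagonal, pi_norm_le_iff_of_nonneg hC]
  exact h

theorem l2_opNorm_transpose (A : Matrix (Fin m) (Fin k) ℝ) : ‖Aᵀ‖ = ‖A‖ := by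
  simpa only [conjTranspose_eq_transpose_of_trivial] using l2_opNorm_conjTranspose A

end Euclidean

theorem norm_mul_mul_sub_mul_mul_le {R : Type*} [SeminormedRing R] (a b c a' b' c' : R) :
    ‖a * b * c - a' * b' * c'‖ ≤
      ‖a - a'‖ * ‖b‖ * ‖c‖ + ‖a'‖ * ‖b - b'‖ * ‖c‖ + ‖a'‖ * ‖b'‖ * ‖c - c'‖ := by
  have hsplit : a * b * c - a' * b' * c' =
      (a - a') * b * c + a' * (b - b') * c + a' * b' * (c - c') := by noncomm_ring
  rw [hsplit]
  exact (norm_add₃_le).trans (add_le_add_three (norm_mul₃_le) (norm_mul₃_le) (norm_mul₃_le))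

section Parameters

variable {n L d : ℕ}

theorem sqrt_sum_sq_comp_le_of_injective {ι κ : Type*} [Fintype ι] [Fintype κ] {e : ι → κ}
    (he : Function.Injective e) (η : κ → ℝ) :
    Real.sqrt (∑ i, η (e i) ^ 2) ≤ Real.sqrt (∑ j, η j ^ 2) := by
  classical
  refine Real.sqrt_le_sqrt ?_
  rw [← Finset.sum_image (f := fun j => η j ^ 2) fun i _ i' _ h => he h]
  exact Finset.sum_le_sum_of_subset_of_nonneg (Finset.subset_univ _) fun j _ _ => sq_nonneg _

theorem paramNorm_nonneg (η : Params n L d) : 0 ≤ paramNorm η := Real.sqrt_nonneg _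

theorem frobNorm_of_comp_le {a b : ℕ} {e : Fin a × Fin b → ParamIdx n L d}
    (he : Function.Injective e) (η : Params n L d) :
    frobNorm (Matrix.of fun i j => η (e (i, j))) ≤ paramNorm η := by
  rw [frobNorm, paramNorm]
  simpa only [Matrix.of_apply, Fintype.sum_prod_type] using sqrt_sum_sq_comp_le_of_injective he η

theorem l2norm_wOut_sub_le (θ θ' : Params n L d) :
    l2norm (wOut θ - wOut θ') ≤ paramNorm (θ - θ') :=
  sqrt_sum_sq_comp_le_of_injective Sum.inl_injective (θ - θ')

theorem norm_Umat_sub_le (θ θ' : Params n L d) :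
    ‖Umat θ - Umat θ'‖ ≤ paramNorm (θ - θ') :=
  (l2_opNorm_le_frobNorm _).trans <|
    frobNorm_of_comp_le (e := fun p => Sum.inr (Sum.inr (Sum.inr p)))
      (fun p q h => by simpa using h) (θ - θ')

theorem norm_Wmat_sub_le (θ θ' : Params n L d) (ℓ : ℕ) :
    ‖Wmat θ ℓ - Wmat θ' ℓ‖ ≤ paramNorm (θ - θ') := by
  unfold Wmat
  split_ifs with h
  · exact (l2_opNorm_le_frobNorm _).trans <| frobNorm_of_comp_le
      (e := fun p => Sum.inr (Sum.inl (⟨ℓ - 1, by omega⟩, p.1, p.2)))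
      (fun p q h => by simpa [Prod.ext_iff] using h) (θ - θ')
  · simpa using paramNorm_nonneg (θ - θ')

theorem norm_Vmat_sub_le (θ θ' : Params n L d) (ℓ : ℕ) :
    ‖Vmat θ ℓ - Vmat θ' ℓ‖ ≤ paramNorm (θ - θ') := by
  unfold Vmat
  split_ifs with h
  · exact (l2_opNorm_le_frobNorm _).trans <| frobNorm_of_comp_le
      (e := fun p => Sum.inr (Sum.inr (Sum.inl (⟨ℓ - 1, by omega⟩, p.1, p.2))))
      (fun p q h => by simpa [Prod.ext_iff] using h) (θ - θ')
  · simpa using paramNorm_nonneg (θ - θ')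

namespace SpectralBounds

variable {θ : Params n L d}

theorem norm_Umat_le (hθ : SpectralBounds θ) : ‖Umat θ‖ ≤ Real.sqrt d + 2 * Real.sqrt n :=
  specNorm_eq_l2_opNorm (Umat θ) ▸ hθ.2.1

theorem norm_Wmat_le (hθ : SpectralBounds θ) (ℓ : ℕ) : ‖Wmat θ ℓ‖ ≤ 3 * Real.sqrt n := by
  by_cases h : 1 ≤ ℓ ∧ ℓ ≤ L
  · exact specNorm_eq_l2_opNorm (Wmat θ ℓ) ▸ (hθ.2.2 ℓ h.1 h.2).1
  · simp only [Wmat, dif_neg h, norm_zero]; positivity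

theorem norm_Vmat_le (hθ : SpectralBounds θ) (ℓ : ℕ) : ‖Vmat θ ℓ‖ ≤ 3 * Real.sqrt n := by
  by_cases h : 1 ≤ ℓ ∧ ℓ ≤ L
  · exact specNorm_eq_l2_opNorm (Vmat θ ℓ) ▸ (hθ.2.2 ℓ h.1 h.2).2
  · simp only [Vmat, dif_neg h, norm_zero]; positivity

end SpectralBounds

end Parameters

theorem le_add_mul_mul_pow_of_succ_le {a : ℕ → ℝ} {A b r : ℝ} (hb : 0 ≤ b) (hr : 1 ≤ r)
    (h0 : a 0 ≤ A) (hsucc : ∀ k, a (k + 1) ≤ r * a k + b * r ^ k) (k : ℕ) :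
    a k ≤ (A + k * b) * r ^ k := by
  induction k with
  | zero => simpa using h0
  | succ k ih =>
    calc a (k + 1) ≤ r * ((A + k * b) * r ^ k) + b * r ^ (k + 1) := by
          have hih := mul_le_mul_of_nonneg_left ih (zero_le_one.trans hr)
          have hpow : b * r ^ k ≤ b * r ^ (k + 1) :=
            mul_le_mul_of_nonneg_left (pow_le_pow_right₀ hr k.le_succ) hb
          linarith [hsucc k]
      _ = (A + (k + 1 : ℕ) * b) * r ^ (k + 1) := by push_cast; ring

theorem inv_sqrt_natCast_le_one (d : ℕ) : (Real.sqrt d)⁻¹ ≤ 1 := by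
  rcases Nat.eq_zero_or_pos d with rfl | hd
  · simp
  · exact inv_le_one_of_one_le₀ (Real.one_le_sqrt.2 (by exact_mod_cast hd))

def blockGain (α σv σw Cφ : ℝ) : ℝ := 1 + 9 * α * σv * σw * Cφ

theorem one_le_blockGain {α σv σw Cφ : ℝ} (hα : 0 ≤ α) (hσv : 0 ≤ σv) (hσw : 0 ≤ σw)
    (hCφ : 0 ≤ Cφ) : 1 ≤ blockGain α σv σw Cφ :=
  le_add_of_nonneg_right (by positivity)

section Forward

variable {n L d : ℕ} {φ : ℝ → ℝ} {α σv σw Cφ B : ℝ} {x : Fin d → ℝ} {θ θ' : Params n L d}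

theorem xvec_succ (ℓ : ℕ) :
    xvec φ α σv σw θ x (ℓ + 1) = xvec φ α σv σw θ x ℓ +
      (α * σv / Real.sqrt n) • Vmat θ (ℓ + 1) *ᵥ fun i => φ (gvec φ α σv σw θ x (ℓ + 1) i) :=
  rfl

theorem gvec_succ (ℓ : ℕ) :
    gvec φ α σv σw θ x (ℓ + 1) = (σw / Real.sqrt n) • Wmat θ (ℓ + 1) *ᵥ xvec φ α σv σw θ x ℓ :=
  rfl

theorem l2norm_gvec_succ_le (hn : 0 < n) (hσw : 0 ≤ σw) (hθ : SpectralBounds θ) (ℓ : ℕ) :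
    l2norm (gvec φ α σv σw θ x (ℓ + 1)) ≤ 3 * σw * l2norm (xvec φ α σv σw θ x ℓ) := by
  have hs : 0 < Real.sqrt n := Real.sqrt_pos.2 (by exact_mod_cast hn)
  rw [gvec_succ, l2norm_smul, abs_of_nonneg (by positivity)]
  calc σw / Real.sqrt n * l2norm (Wmat θ (ℓ + 1) *ᵥ xvec φ α σv σw θ x ℓ)
      ≤ σw / Real.sqrt n * (3 * Real.sqrt n * l2norm (xvec φ α σv σw θ x ℓ)) := by
        gcongr
        exact (l2norm_mulVec_le _ _).trans
          (mul_le_mul_of_nonneg_right (hθ.norm_Wmat_le _) (l2norm_nonneg _))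
    _ = 3 * σw * l2norm (xvec φ α σv σw θ x ℓ) := by field_simp

theorem l2norm_xvec_zero_le (hn : 0 < n) (hx : l2norm x ≤ B) (hθ : SpectralBounds θ) :
    l2norm (xvec φ α σv σw θ x 0) ≤ 3 * B * Real.sqrt n := by
  have hB : 0 ≤ B := (l2norm_nonneg x).trans hx
  have hs : 1 ≤ Real.sqrt n := Real.one_le_sqrt.2 (by exact_mod_cast hn)
  rcases Nat.eq_zero_or_pos d with rfl | hd
  · simp only [xvec, Nat.cast_zero, Real.sqrt_zero, _root_.inv_zero, l2norm_smul, abs_zero,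
      zero_mul]
    positivity
  have hsd : 1 ≤ Real.sqrt d := Real.one_le_sqrt.2 (by exact_mod_cast hd)
  rw [xvec, l2norm_smul, abs_of_nonneg (by positivity)]
  calc (Real.sqrt d)⁻¹ * l2norm (Umat θ *ᵥ x)
      ≤ (Real.sqrt d)⁻¹ * ((Real.sqrt d + 2 * Real.sqrt n) * B) := by
        gcongr
        exact (l2norm_mulVec_le _ _).trans (mul_le_mul hθ.norm_Umat_le hx (l2norm_nonneg _)
          (by positivity))
    _ = B + (Real.sqrt d)⁻¹ * (2 * Real.sqrt n * B) := by field_simp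
    _ ≤ B + 1 * (2 * Real.sqrt n * B) := by gcongr; exact inv_le_one_of_one_le₀ hsd
    _ ≤ 3 * B * Real.sqrt n := by nlinarith

theorem l2norm_xvec_succ_le (hn : 0 < n) (hα : 0 ≤ α) (hσv : 0 ≤ σv) (hσw : 0 ≤ σw)
    (hCφ : 0 ≤ Cφ) (hφ : ∀ z, |φ z| ≤ Cφ * |z|) (hθ : SpectralBounds θ) (ℓ : ℕ) :
    l2norm (xvec φ α σv σw θ x (ℓ + 1)) ≤
      blockGain α σv σw Cφ * l2norm (xvec φ α σv σw θ x ℓ) := by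
  have hs : 0 < Real.sqrt n := Real.sqrt_pos.2 (by exact_mod_cast hn)
  set X := l2norm (xvec φ α σv σw θ x ℓ)
  have hφg : l2norm (fun i => φ (gvec φ α σv σw θ x (ℓ + 1) i)) ≤ Cφ * (3 * σw * X) :=
    (l2norm_le_mul_of_abs_le hCφ fun i => hφ _).trans
      (mul_le_mul_of_nonneg_left (l2norm_gvec_succ_le hn hσw hθ ℓ) hCφ)
  have hbranch : l2norm (Vmat θ (ℓ + 1) *ᵥ fun i => φ (gvec φ α σv σw θ x (ℓ + 1) i)) ≤
      3 * Real.sqrt n * (Cφ * (3 * σw * X)) :=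
    (l2norm_mulVec_le _ _).trans
      (mul_le_mul (hθ.norm_Vmat_le _) hφg (l2norm_nonneg _) (by positivity))
  calc l2norm (xvec φ α σv σw θ x (ℓ + 1))
      ≤ X + α * σv / Real.sqrt n * (3 * Real.sqrt n * (Cφ * (3 * σw * X))) := by
        rw [xvec_succ]
        refine (l2norm_add_le _ _).trans ?_
        rw [l2norm_smul, abs_of_nonneg (by positivity)]
        gcongr
    _ = blockGain α σv σw Cφ * X := by unfold blockGain; field_simp; ring

theorem l2norm_xvec_le (hn : 0 < n) (hα : 0 ≤ α) (hσv : 0 ≤ σv) (hσw : 0 ≤ σw)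
    (hCφ : 0 ≤ Cφ) (hφ : ∀ z, |φ z| ≤ Cφ * |z|) (hx : l2norm x ≤ B) (hθ : SpectralBounds θ)
    (ℓ : ℕ) :
    l2norm (xvec φ α σv σw θ x ℓ) ≤ 3 * B * Real.sqrt n * blockGain α σv σw Cφ ^ ℓ := by
  simpa using le_add_mul_mul_pow_of_succ_le (a := fun k => l2norm (xvec φ α σv σw θ x k))
    le_rfl (one_le_blockGain hα hσv hσw hCφ) (l2norm_xvec_zero_le hn hx hθ)
    (fun k => by simpa using l2norm_xvec_succ_le hn hα hσv hσw hCφ hφ hθ k) ℓ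

end Forward

section ForwardLipschitz

variable {n L d : ℕ} {φ : ℝ → ℝ} {α σv σw Cφ B : ℝ} {x : Fin d → ℝ} {θ θ' : Params n L d}

theorem l2norm_gvec_succ_sub_le (hn : 0 < n) (hσw : 0 ≤ σw) (hθ' : SpectralBounds θ')
    (ℓ : ℕ) :
    l2norm (gvec φ α σv σw θ x (ℓ + 1) - gvec φ α σv σw θ' x (ℓ + 1)) ≤
      σw / Real.sqrt n * paramNorm (θ - θ') * l2norm (xvec φ α σv σw θ x ℓ) +
        3 * σw * l2norm (xvec φ α σv σw θ x ℓ - xvec φ α σv σw θ' x ℓ) := by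
  have hs : 0 < Real.sqrt n := Real.sqrt_pos.2 (by exact_mod_cast hn)
  rw [gvec_succ, gvec_succ, ← smul_sub, l2norm_smul, abs_of_nonneg (by positivity)]
  calc σw / Real.sqrt n * l2norm (Wmat θ (ℓ + 1) *ᵥ xvec φ α σv σw θ x ℓ -
        Wmat θ' (ℓ + 1) *ᵥ xvec φ α σv σw θ' x ℓ)
      ≤ σw / Real.sqrt n * (paramNorm (θ - θ') * l2norm (xvec φ α σv σw θ x ℓ) +
          3 * Real.sqrt n * l2norm (xvec φ α σv σw θ x ℓ - xvec φ α σv σw θ' x ℓ)) := by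
        gcongr
        refine (l2norm_mulVec_sub_mulVec_le _ _ _ _).trans (add_le_add ?_ ?_)
        · exact mul_le_mul_of_nonneg_right (norm_Wmat_sub_le θ θ' _) (l2norm_nonneg _)
        · exact mul_le_mul_of_nonneg_right (hθ'.norm_Wmat_le _) (l2norm_nonneg _)
    _ = _ := by field_simp

theorem l2norm_xvec_zero_sub_le (hx : l2norm x ≤ B) :
    l2norm (xvec φ α σv σw θ x 0 - xvec φ α σv σw θ' x 0) ≤ B * paramNorm (θ - θ') := by
  rw [xvec, xvec, ← smul_sub, ← sub_mulVec, l2norm_smul,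
    abs_of_nonneg (inv_nonneg.2 (Real.sqrt_nonneg _))]
  calc (Real.sqrt d)⁻¹ * l2norm ((Umat θ - Umat θ') *ᵥ x)
      ≤ 1 * (paramNorm (θ - θ') * B) :=
        mul_le_mul (inv_sqrt_natCast_le_one d) ((l2norm_mulVec_le _ _).trans
          (mul_le_mul (norm_Umat_sub_le θ θ') hx (l2norm_nonneg _) (paramNorm_nonneg _)))
          (l2norm_nonneg _) zero_le_one
    _ = B * paramNorm (θ - θ') := by ring

theorem l2norm_xvec_succ_sub_le (hn : 0 < n) (hα : 0 ≤ α) (hσv : 0 ≤ σv) (hσw : 0 ≤ σw)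
    (hCφ : 0 ≤ Cφ) (hφ : ∀ z, |φ z| ≤ Cφ * |z|) (hφl : ∀ z z', |φ z - φ z'| ≤ Cφ * |z - z'|)
    (hx : l2norm x ≤ B) (hθ : SpectralBounds θ) (hθ' : SpectralBounds θ') (ℓ : ℕ) :
    l2norm (xvec φ α σv σw θ x (ℓ + 1) - xvec φ α σv σw θ' x (ℓ + 1)) ≤
      blockGain α σv σw Cφ * l2norm (xvec φ α σv σw θ x ℓ - xvec φ α σv σw θ' x ℓ) +
        18 * α * σv * σw * Cφ * B * paramNorm (θ - θ') * blockGain α σv σw Cφ ^ ℓ := by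
  have hs : 0 < Real.sqrt n := Real.sqrt_pos.2 (by exact_mod_cast hn)
  have hP := paramNorm_nonneg (θ - θ')
  set P := paramNorm (θ - θ')
  set Δ := l2norm (xvec φ α σv σw θ x ℓ - xvec φ α σv σw θ' x ℓ)
  set X := 3 * B * Real.sqrt n * blockGain α σv σw Cφ ^ ℓ
  set g := gvec φ α σv σw θ x (ℓ + 1)
  set g' := gvec φ α σv σw θ' x (ℓ + 1)
  have hX : l2norm (xvec φ α σv σw θ x ℓ) ≤ X := l2norm_xvec_le hn hα hσv hσw hCφ hφ hx hθ ℓ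
  have hφg : l2norm (fun i => φ (g i)) ≤ Cφ * (3 * σw * X) :=
    (l2norm_le_mul_of_abs_le hCφ fun i => hφ _).trans (by
      gcongr; exact (l2norm_gvec_succ_le hn hσw hθ ℓ).trans (by gcongr))
  have hφgg' : l2norm ((fun i => φ (g i)) - fun i => φ (g' i)) ≤
      Cφ * (σw / Real.sqrt n * P * X + 3 * σw * Δ) :=
    (l2norm_le_mul_of_abs_le hCφ fun i => hφl (g i) (g' i)).trans (by
      gcongr; exact (l2norm_gvec_succ_sub_le hn hσw hθ' ℓ).trans (by gcongr))
  have hbranch : l2norm (Vmat θ (ℓ + 1) *ᵥ (fun i => φ (g i)) -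
      Vmat θ' (ℓ + 1) *ᵥ fun i => φ (g' i)) ≤
      P * (Cφ * (3 * σw * X)) +
        3 * Real.sqrt n * (Cφ * (σw / Real.sqrt n * P * X + 3 * σw * Δ)) :=
    (l2norm_mulVec_sub_mulVec_le _ _ _ _).trans (add_le_add
      (mul_le_mul (norm_Vmat_sub_le θ θ' _) hφg (l2norm_nonneg _) hP)
      (mul_le_mul (hθ'.norm_Vmat_le _) hφgg' (l2norm_nonneg _) (by positivity)))
  calc l2norm (xvec φ α σv σw θ x (ℓ + 1) - xvec φ α σv σw θ' x (ℓ + 1))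
      ≤ Δ + α * σv / Real.sqrt n * (P * (Cφ * (3 * σw * X)) +
          3 * Real.sqrt n * (Cφ * (σw / Real.sqrt n * P * X + 3 * σw * Δ))) := by
        rw [xvec_succ, xvec_succ, add_sub_add_comm, ← smul_sub]
        refine (l2norm_add_le _ _).trans ?_
        rw [l2norm_smul, abs_of_nonneg (by positivity)]
        gcongr
    _ = _ := by unfold X blockGain; field_simp; ring

theorem l2norm_xvec_sub_le (hn : 0 < n) (hα : 0 ≤ α) (hσv : 0 ≤ σv) (hσw : 0 ≤ σw)
    (hCφ : 0 ≤ Cφ) (hφ : ∀ z, |φ z| ≤ Cφ * |z|) (hφl : ∀ z z', |φ z - φ z'| ≤ Cφ * |z - z'|)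
    (hx : l2norm x ≤ B) (hθ : SpectralBounds θ) (hθ' : SpectralBounds θ') (ℓ : ℕ) :
    l2norm (xvec φ α σv σw θ x ℓ - xvec φ α σv σw θ' x ℓ) ≤
      (B + ℓ * (18 * α * σv * σw * Cφ * B)) * blockGain α σv σw Cφ ^ ℓ *
        paramNorm (θ - θ') := by
  have hB : 0 ≤ B := (l2norm_nonneg x).trans hx
  have hgronwall := le_add_mul_mul_pow_of_succ_le
    (a := fun k => l2norm (xvec φ α σv σw θ x k - xvec φ α σv σw θ' x k))
    (mul_nonneg (by positivity) (paramNorm_nonneg _))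
    (one_le_blockGain hα hσv hσw hCφ) (l2norm_xvec_zero_sub_le hx)
    (l2norm_xvec_succ_sub_le hn hα hσv hσw hCφ hφ hφl hx hθ hθ') ℓ
  exact hgronwall.trans_eq (by ring)

theorem l2norm_gvec_sub_le (hn : 0 < n) (hα : 0 ≤ α) (hσv : 0 ≤ σv) (hσw : 0 ≤ σw)
    (hCφ : 0 ≤ Cφ) (hφ : ∀ z, |φ z| ≤ Cφ * |z|) (hφl : ∀ z z', |φ z - φ z'| ≤ Cφ * |z - z'|)
    (hx : l2norm x ≤ B) (hθ : SpectralBounds θ) (hθ' : SpectralBounds θ') {ℓ : ℕ}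
    (hℓ : ℓ ≤ L) :
    l2norm (gvec φ α σv σw θ x ℓ - gvec φ α σv σw θ' x ℓ) ≤
      3 * σw * ((2 * B + L * (18 * α * σv * σw * Cφ * B)) * blockGain α σv σw Cφ ^ L) *
        paramNorm (θ - θ') := by
  have hB : 0 ≤ B := (l2norm_nonneg x).trans hx
  have hP := paramNorm_nonneg (θ - θ')
  have hr := one_le_blockGain hα hσv hσw hCφ
  obtain _ | m := ℓ
  · have hW : ∀ η : Params n L d, Wmat η 0 = 0 := fun η => dif_neg (by omega)
    have hr0 : 0 < blockGain α σv σw Cφ := zero_lt_one.trans_le hr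
    simp only [gvec, hW, zero_mulVec, smul_zero, sub_self, l2norm_zero]
    positivity
  have hs : 0 < Real.sqrt n := Real.sqrt_pos.2 (by exact_mod_cast hn)
  calc l2norm (gvec φ α σv σw θ x (m + 1) - gvec φ α σv σw θ' x (m + 1))
      ≤ σw / Real.sqrt n * paramNorm (θ - θ') *
            (3 * B * Real.sqrt n * blockGain α σv σw Cφ ^ m) +
          3 * σw * ((B + m * (18 * α * σv * σw * Cφ * B)) * blockGain α σv σw Cφ ^ m *
            paramNorm (θ - θ')) :=
        (l2norm_gvec_succ_sub_le hn hσw hθ' m).trans (by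
          gcongr
          · exact l2norm_xvec_le hn hα hσv hσw hCφ hφ hx hθ m
          · exact l2norm_xvec_sub_le hn hα hσv hσw hCφ hφ hφl hx hθ hθ' m)
    _ = 3 * σw * ((2 * B + m * (18 * α * σv * σw * Cφ * B)) * blockGain α σv σw Cφ ^ m) *
          paramNorm (θ - θ') := by field_simp; ring
    _ ≤ _ := by
        gcongr <;> omega

end ForwardLipschitz

def backwardMatrix {n L d : ℕ} (φ : ℝ → ℝ) (α σv σw : ℝ) (θ : Params n L d) (x : Fin d → ℝ)
    (ℓ : ℕ) : Matrix (Fin n) (Fin n) ℝ :=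
  (Wmat θ ℓ)ᵀ * diagonal (fun i => deriv φ (gvec φ α σv σw θ x ℓ i)) * (Vmat θ ℓ)ᵀ

section Backward

variable {n L d : ℕ} {φ : ℝ → ℝ} {α σv σw Cφ : ℝ} {x : Fin d → ℝ} {θ θ' : Params n L d}

theorem deltaAux_succ (k : ℕ) :
    deltaAux φ α σv σw θ x (k + 1) = deltaAux φ α σv σw θ x k +
      (α * σw * σv / n) • backwardMatrix φ α σv σw θ x (L - k) *ᵥ deltaAux φ α σv σw θ x k :=
  rfl

theorem norm_backwardMatrix_le (hCφ : 0 ≤ Cφ) (hφ' : ∀ z, |deriv φ z| ≤ Cφ)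
    (hθ : SpectralBounds θ) (ℓ : ℕ) : ‖backwardMatrix φ α σv σw θ x ℓ‖ ≤ 9 * n * Cφ := by
  calc ‖backwardMatrix φ α σv σw θ x ℓ‖
      ≤ 3 * Real.sqrt n * Cφ * (3 * Real.sqrt n) := by
        refine norm_mul₃_le.trans ?_
        rw [l2_opNorm_transpose, l2_opNorm_transpose]
        gcongr
        · exact hθ.norm_Wmat_le ℓ
        · exact l2_opNorm_diagonal_le hCφ fun i => hφ' _
        · exact hθ.norm_Vmat_le ℓ
    _ = 9 * n * Cφ := by
        rw [show (9 : ℝ) * n * Cφ = 9 * (Real.sqrt n * Real.sqrt n) * Cφ by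
          rw [Real.mul_self_sqrt n.cast_nonneg]]
        ring

theorem norm_backwardMatrix_sub_le (hCφ : 0 ≤ Cφ) (hφ' : ∀ z, |deriv φ z| ≤ Cφ)
    (hφ'l : ∀ z z', |deriv φ z - deriv φ z'| ≤ Cφ * |z - z'|) (hθ : SpectralBounds θ)
    (hθ' : SpectralBounds θ') (ℓ : ℕ) :
    ‖backwardMatrix φ α σv σw θ x ℓ - backwardMatrix φ α σv σw θ' x ℓ‖ ≤
      3 * Real.sqrt n * Cφ * (2 * paramNorm (θ - θ') +
        3 * Real.sqrt n * l2norm (gvec φ α σv σw θ x ℓ - gvec φ α σv σw θ' x ℓ)) := by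
  have hD : ‖diagonal (fun i => deriv φ (gvec φ α σv σw θ x ℓ i)) -
      diagonal (fun i => deriv φ (gvec φ α σv σw θ' x ℓ i))‖ ≤
      Cφ * l2norm (gvec φ α σv σw θ x ℓ - gvec φ α σv σw θ' x ℓ) := by
    rw [diagonal_sub]
    exact l2_opNorm_diagonal_le (mul_nonneg hCφ (l2norm_nonneg _)) fun i =>
      (hφ'l _ _).trans (mul_le_mul_of_nonneg_left
        (abs_le_l2norm (gvec φ α σv σw θ x ℓ - gvec φ α σv σw θ' x ℓ) i) hCφ)
  refine (norm_mul_mul_sub_mul_mul_le _ _ _ _ _ _).trans ?_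
  rw [← transpose_sub, ← transpose_sub]
  simp only [l2_opNorm_transpose]
  calc _ ≤ paramNorm (θ - θ') * Cφ * (3 * Real.sqrt n) +
        3 * Real.sqrt n * (Cφ * l2norm (gvec φ α σv σw θ x ℓ - gvec φ α σv σw θ' x ℓ)) *
          (3 * Real.sqrt n) + 3 * Real.sqrt n * Cφ * paramNorm (θ - θ') := by
        have hP := paramNorm_nonneg (θ - θ')
        have hg := l2norm_nonneg (gvec φ α σv σw θ x ℓ - gvec φ α σv σw θ' x ℓ)
        have hDθ := l2_opNorm_diagonal_le hCφ fun i => hφ' (gvec φ α σv σw θ x ℓ i)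
        have hDθ' := l2_opNorm_diagonal_le hCφ fun i => hφ' (gvec φ α σv σw θ' x ℓ i)
        have hW := norm_Wmat_sub_le θ θ' ℓ
        have hV := norm_Vmat_sub_le θ θ' ℓ
        have hVθ := hθ.norm_Vmat_le ℓ
        have hWθ' := hθ'.norm_Wmat_le ℓ
        gcongr
    _ = _ := by ring

theorem l2norm_deltaAux_zero_le (hn : 0 < n) (hσw : 0 ≤ σw) (hθ : SpectralBounds θ) :
    l2norm (deltaAux φ α σv σw θ x 0) ≤ 2 * σw := by
  have hs : 0 < Real.sqrt n := Real.sqrt_pos.2 (by exact_mod_cast hn)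
  rw [deltaAux, l2norm_smul, abs_of_nonneg (by positivity)]
  calc σw / Real.sqrt n * l2norm (wOut θ) ≤ σw / Real.sqrt n * (2 * Real.sqrt n) := by
        gcongr
        exact hθ.1
    _ = 2 * σw := by field_simp

theorem l2norm_deltaAux_succ_le (hn : 0 < n) (hα : 0 ≤ α) (hσv : 0 ≤ σv) (hσw : 0 ≤ σw)
    (hCφ : 0 ≤ Cφ) (hφ' : ∀ z, |deriv φ z| ≤ Cφ) (hθ : SpectralBounds θ) (k : ℕ) :
    l2norm (deltaAux φ α σv σw θ x (k + 1)) ≤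
      blockGain α σv σw Cφ * l2norm (deltaAux φ α σv σw θ x k) := by
  have hn' : (0 : ℝ) < n := by exact_mod_cast hn
  rw [deltaAux_succ]
  refine (l2norm_add_le _ _).trans ?_
  rw [l2norm_smul, abs_of_nonneg (by positivity)]
  calc l2norm (deltaAux φ α σv σw θ x k) + α * σw * σv / n *
        l2norm (backwardMatrix φ α σv σw θ x (L - k) *ᵥ deltaAux φ α σv σw θ x k)
      ≤ l2norm (deltaAux φ α σv σw θ x k) + α * σw * σv / n *
          (9 * n * Cφ * l2norm (deltaAux φ α σv σw θ x k)) := by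
        gcongr
        exact (l2norm_mulVec_le _ _).trans (mul_le_mul_of_nonneg_right
          (norm_backwardMatrix_le hCφ hφ' hθ _) (l2norm_nonneg _))
    _ = _ := by unfold blockGain; field_simp

theorem l2norm_deltaAux_le (hn : 0 < n) (hα : 0 ≤ α) (hσv : 0 ≤ σv) (hσw : 0 ≤ σw)
    (hCφ : 0 ≤ Cφ) (hφ' : ∀ z, |deriv φ z| ≤ Cφ) (hθ : SpectralBounds θ) (k : ℕ) :
    l2norm (deltaAux φ α σv σw θ x k) ≤ 2 * σw * blockGain α σv σw Cφ ^ k := by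
  simpa using le_add_mul_mul_pow_of_succ_le (a := fun k => l2norm (deltaAux φ α σv σw θ x k))
    le_rfl (one_le_blockGain hα hσv hσw hCφ) (l2norm_deltaAux_zero_le hn hσw hθ)
    (fun k => by simpa using l2norm_deltaAux_succ_le hn hα hσv hσw hCφ hφ' hθ k) k

theorem l2norm_deltaAux_zero_sub_le (hn : 0 < n) (hσw : 0 ≤ σw) :
    l2norm (deltaAux φ α σv σw θ x 0 - deltaAux φ α σv σw θ' x 0) ≤
      σw * paramNorm (θ - θ') := by
  have hs : 1 ≤ Real.sqrt n := Real.one_le_sqrt.2 (by exact_mod_cast hn)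
  rw [deltaAux, deltaAux, ← smul_sub, l2norm_smul, abs_of_nonneg (by positivity)]
  exact mul_le_mul (div_le_self hσw hs) (l2norm_wOut_sub_le θ θ') (l2norm_nonneg _) hσw

theorem l2norm_deltaAux_succ_sub_le (hn : 0 < n) (hα : 0 ≤ α) (hσv : 0 ≤ σv) (hσw : 0 ≤ σw)
    (hCφ : 0 ≤ Cφ) (hφ' : ∀ z, |deriv φ z| ≤ Cφ)
    (hφ'l : ∀ z z', |deriv φ z - deriv φ z'| ≤ Cφ * |z - z'|) (hθ : SpectralBounds θ)
    (hθ' : SpectralBounds θ') {G : ℝ} (k : ℕ)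
    (hg : l2norm (gvec φ α σv σw θ x (L - k) - gvec φ α σv σw θ' x (L - k)) ≤ G) :
    l2norm (deltaAux φ α σv σw θ x (k + 1) - deltaAux φ α σv σw θ' x (k + 1)) ≤
      blockGain α σv σw Cφ * l2norm (deltaAux φ α σv σw θ x k - deltaAux φ α σv σw θ' x k) +
        6 * α * σv * σw ^ 2 * Cφ * (2 * paramNorm (θ - θ') + 3 * G) *
          blockGain α σv σw Cφ ^ k := by
  have hs : 1 ≤ Real.sqrt n := Real.one_le_sqrt.2 (by exact_mod_cast hn)
  have hP := paramNorm_nonneg (θ - θ')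
  have hG : 0 ≤ G := (l2norm_nonneg _).trans hg
  have hr : 0 < blockGain α σv σw Cφ := zero_lt_one.trans_le (one_le_blockGain hα hσv hσw hCφ)
  have hδ := l2norm_deltaAux_le (x := x) hn hα hσv hσw hCφ hφ' hθ k
  set s := Real.sqrt n
  have hsn : s ^ 2 = n := Real.sq_sqrt n.cast_nonneg
  set P := paramNorm (θ - θ')
  set Δ := l2norm (deltaAux φ α σv σw θ x k - deltaAux φ α σv σw θ' x k)
  have hM : ‖backwardMatrix φ α σv σw θ x (L - k) - backwardMatrix φ α σv σw θ' x (L - k)‖ ≤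
      3 * s * Cφ * (2 * P + 3 * s * G) :=
    (norm_backwardMatrix_sub_le hCφ hφ' hφ'l hθ hθ' _).trans (by gcongr)
  have hstep : l2norm (backwardMatrix φ α σv σw θ x (L - k) *ᵥ deltaAux φ α σv σw θ x k -
      backwardMatrix φ α σv σw θ' x (L - k) *ᵥ deltaAux φ α σv σw θ' x k) ≤
      3 * s * Cφ * (2 * P + 3 * s * G) * (2 * σw * blockGain α σv σw Cφ ^ k) +
        9 * n * Cφ * Δ :=
    (l2norm_mulVec_sub_mulVec_le _ _ _ _).trans (add_le_add
      (mul_le_mul hM hδ (l2norm_nonneg _) (by positivity))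
      (mul_le_mul_of_nonneg_right (norm_backwardMatrix_le hCφ hφ' hθ' _) (l2norm_nonneg _)))
  calc l2norm (deltaAux φ α σv σw θ x (k + 1) - deltaAux φ α σv σw θ' x (k + 1))
      ≤ Δ + α * σw * σv / n * (3 * s * Cφ * (2 * P + 3 * s * G) *
          (2 * σw * blockGain α σv σw Cφ ^ k) + 9 * n * Cφ * Δ) := by
        rw [deltaAux_succ, deltaAux_succ, add_sub_add_comm, ← smul_sub]
        refine (l2norm_add_le _ _).trans ?_
        rw [l2norm_smul, abs_of_nonneg (by positivity)]
        gcongr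
    _ = blockGain α σv σw Cφ * Δ +
          6 * α * σv * σw ^ 2 * Cφ * (2 * P / s + 3 * G) * blockGain α σv σw Cφ ^ k := by
        rw [← hsn]; unfold blockGain; field_simp; ring
    _ ≤ _ := by gcongr; exact div_le_self (by positivity) hs

theorem l2norm_deltaAux_sub_le (hn : 0 < n) (hα : 0 ≤ α) (hσv : 0 ≤ σv) (hσw : 0 ≤ σw)
    (hCφ : 0 ≤ Cφ) (hφ' : ∀ z, |deriv φ z| ≤ Cφ)
    (hφ'l : ∀ z z', |deriv φ z - deriv φ z'| ≤ Cφ * |z - z'|) (hθ : SpectralBounds θ)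
    (hθ' : SpectralBounds θ') {G : ℝ}
    (hg : ∀ ℓ ≤ L, l2norm (gvec φ α σv σw θ x ℓ - gvec φ α σv σw θ' x ℓ) ≤ G) (k : ℕ) :
    l2norm (deltaAux φ α σv σw θ x k - deltaAux φ α σv σw θ' x k) ≤
      (σw * paramNorm (θ - θ') +
          k * (6 * α * σv * σw ^ 2 * Cφ * (2 * paramNorm (θ - θ') + 3 * G))) *
        blockGain α σv σw Cφ ^ k := by
  have hG : 0 ≤ G := (l2norm_nonneg _).trans (hg 0 L.zero_le)
  have hP := paramNorm_nonneg (θ - θ')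
  exact le_add_mul_mul_pow_of_succ_le
    (a := fun k => l2norm (deltaAux φ α σv σw θ x k - deltaAux φ α σv σw θ' x k))
    (by positivity) (one_le_blockGain hα hσv hσw hCφ) (l2norm_deltaAux_zero_sub_le hn hσw)
    (fun k => l2norm_deltaAux_succ_sub_le hn hα hσv hσw hCφ hφ' hφ'l hθ hθ' k
      (hg _ (Nat.sub_le L k))) k

end Backward

theorem backward_parameter_lipschitz_general
    (L d : ℕ)
    (α σv σw Cφ B : ℝ) (hα : 0 < α) (hσv : 0 < σv) (hσw : 0 < σw) (hCφ : 0 < Cφ)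
    (hB : 0 ≤ B) :
    ∃ K : ℝ, 0 < K ∧
      ∀ (n : ℕ) (φ : ℝ → ℝ), Differentiable ℝ φ →
        (∀ z : ℝ, |φ z| ≤ Cφ * |z|) → (∀ z : ℝ, |deriv φ z| ≤ Cφ) →
        (∀ z z' : ℝ, |φ z - φ z'| ≤ Cφ * |z - z'|) →
        (∀ z z' : ℝ, |deriv φ z - deriv φ z'| ≤ Cφ * |z - z'|) →
        ∀ x : Fin d → ℝ, l2norm x ≤ B →
        ∀ θ θ' : Params n L d, SpectralBounds θ → SpectralBounds θ' →
          ∀ ℓ : ℕ, ℓ ≤ L →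
            l2norm (deltaVec φ α σv σw θ x ℓ - deltaVec φ α σv σw θ' x ℓ) ≤
              K * paramNorm (θ - θ') := by
  set r := blockGain α σv σw Cφ
  have hr : 1 ≤ r := one_le_blockGain hα.le hσv.le hσw.le hCφ.le
  have hr0 : 0 < r := zero_lt_one.trans_le hr
  set G := 3 * σw * ((2 * B + L * (18 * α * σv * σw * Cφ * B)) * r ^ L)
  set c := 6 * α * σv * σw ^ 2 * Cφ * (2 + 3 * G)
  refine ⟨(σw + L * c) * r ^ L, by positivity, ?_⟩
  intro n φ _ hφ hφ' hφl hφ'l x hx θ θ' hθ hθ' ℓ hℓ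
  have hP := paramNorm_nonneg (θ - θ')
  rcases Nat.eq_zero_or_pos n with rfl | hn
  · rw [Subsingleton.elim (_ - _) 0, l2norm_zero]
    positivity
  calc l2norm (deltaVec φ α σv σw θ x ℓ - deltaVec φ α σv σw θ' x ℓ)
      ≤ (σw * paramNorm (θ - θ') + (L - ℓ : ℕ) * (6 * α * σv * σw ^ 2 * Cφ *
          (2 * paramNorm (θ - θ') + 3 * (G * paramNorm (θ - θ'))))) * r ^ (L - ℓ) :=
        l2norm_deltaAux_sub_le hn hα.le hσv.le hσw.le hCφ.le hφ' hφ'l hθ hθ'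
          (fun _ hℓ => l2norm_gvec_sub_le hn hα.le hσv.le hσw.le hCφ.le hφ hφl hx hθ hθ' hℓ)
          (L - ℓ)
    _ = (σw + (L - ℓ : ℕ) * c) * r ^ (L - ℓ) * paramNorm (θ - θ') := by ring
    _ ≤ (σw + L * c) * r ^ L * paramNorm (θ - θ') := by gcongr <;> omega

/-- **Backward parameter-Lipschitz bound.** There is a constant K depending only on
L, α, σ_v, σ_w, C_φ, B and d (not on n) such that for all parameter vectors θ, θ̃
satisfying the spectral bounds and every ℓ ∈ {0,…,L}:
‖δ^{(ℓ)}(θ) − δ^{(ℓ)}(θ̃)‖₂ ≤ K‖θ − θ̃‖₂. -/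
theorem backward_parameter_lipschitz
    (L d : ℕ) (hL : 1 ≤ L) (hd : 1 ≤ d)
    (α σv σw Cφ B : ℝ) (hα : 0 < α) (hσv : 0 < σv) (hσw : 0 < σw) (hCφ : 0 < Cφ)
    (hB : 0 ≤ B) :
    ∃ K : ℝ, 0 < K ∧
      ∀ (n : ℕ) (φ : ℝ → ℝ), Differentiable ℝ φ →
        (∀ z : ℝ, |φ z| ≤ Cφ * |z|) → (∀ z : ℝ, |deriv φ z| ≤ Cφ) →
        (∀ z z' : ℝ, |φ z - φ z'| ≤ Cφ * |z - z'|) →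
        (∀ z z' : ℝ, |deriv φ z - deriv φ z'| ≤ Cφ * |z - z'|) →
        ∀ x : Fin d → ℝ, l2norm x ≤ B →
        ∀ θ θ' : Params n L d, SpectralBounds θ → SpectralBounds θ' →
          ∀ ℓ : ℕ, ℓ ≤ L →
            l2norm (deltaVec φ α σv σw θ x ℓ - deltaVec φ α σv σw θ' x ℓ) ≤
              K * paramNorm (θ - θ') :=
  backward_parameter_lipschitz_general L d α σv σw Cφ B hα hσv hσw hCφ hB

end
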